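/- arXiv:2303.01848 — 3 statements merged into one kernel-verified Lean document; each statement's English description precedes it below -/
import Mathlib

section
/- Let χ be a primitive Dirichlet character modulo q, and let τ(χ̄) denote the Gauss sum of the conjugate character. Then for any positive integer N, ∑_{n=1}^N χ(n) = (1/τ(χ̄)) ∑_{0<|a|<q/2} χ̄(a) (e(aN/q) − 1)/(1 − e(−a/q)), where e(t) = exp(2πit). -/
open Complex

noncomputable def e (t : ℝ) : ℂ := Complex.exp (2 * Real.pi * Complex.I * t)

private lemma e_int_div (q : ℕ) [NeZero q] (j : ℤ) :
    e ((j : ℝ) / q) = ZMod.stdAddChar (j : ZMod q) := by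
  rw [ZMod.stdAddChar_coe, e]
  congr 1
  push_cast
  ring

private lemma geom_Icc {z : ℂ} (hz0 : z ≠ 0) (hz1 : z ≠ 1) (N : ℕ) :
    ∑ n ∈ Finset.Icc 1 N, z ^ n = (z ^ N - 1) / (1 - z⁻¹) := by
  have h1 : z - 1 ≠ 0 := sub_ne_zero.mpr hz1
  have h2 : (1 : ℂ) - z⁻¹ ≠ 0 := by
    rw [sub_ne_zero]
    intro h
    exact hz1 (inv_eq_one.mp h.symm)
  have hIcc : Finset.Icc 1 N = Finset.Ico 1 (N + 1) := by
    rw [Finset.Ico_add_one_right_eq_Icc]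
  rw [hIcc, geom_sum_Ico hz1 (by omega)]
  field_simp
  ring

private lemma factorsThrough_inv {q d : ℕ} {χ : DirichletCharacter ℂ q}
    (h : χ.FactorsThrough d) : (χ⁻¹).FactorsThrough d := by
  obtain ⟨hd, χ₀, hχ₀⟩ := h
  exact ⟨hd, χ₀⁻¹, by rw [map_inv, ← hχ₀]⟩

private lemma isPrimitive_inv {q : ℕ} {χ : DirichletCharacter ℂ q} (h : χ.IsPrimitive) :
    (χ⁻¹).IsPrimitive := by
  have hset : DirichletCharacter.conductorSet χ⁻¹ = DirichletCharacter.conductorSet χ := by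
    ext d
    constructor
    · intro hd
      have := factorsThrough_inv (χ := χ⁻¹) (d := d) hd
      rwa [inv_inv] at this
    · intro hd
      exact factorsThrough_inv hd
  rw [DirichletCharacter.IsPrimitive, DirichletCharacter.conductor, hset]
  exact h

private lemma gauss_ne_zero {q : ℕ} [NeZero q] {χ : DirichletCharacter ℂ q}
    (hχ : χ.IsPrimitive) : gaussSum χ ZMod.stdAddChar ≠ 0 := by
  intro h
  have h3 : ZMod.dft (χ : ZMod q → ℂ) = ZMod.dft (0 : ZMod q → ℂ) := by
    funext k
    rw [hχ.fourierTransform_eq_inv_mul_gaussSum, h, mul_zero, map_zero]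
    rfl
  have h4 : (χ : ZMod q → ℂ) = 0 := ZMod.dft.injective h3
  have h5 := congrFun h4 1
  simp only [map_one, Pi.zero_apply] at h5
  exact one_ne_zero h5


private lemma emod_cases {q : ℕ} {a : ℤ} (h1 : -(q : ℤ) < a) (h2 : a < q) :
    (0 ≤ a ∧ a % (q : ℤ) = a) ∨ (a < 0 ∧ a % (q : ℤ) = a + q) := by
  rcases le_or_gt 0 a with h | h
  · exact Or.inl ⟨h, Int.emod_eq_of_lt h h2⟩
  · refine Or.inr ⟨h, ?_⟩
    have h' : (a + q) % (q : ℤ) = a % q := by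
      simpa using Int.add_mul_emod_self_left (a := a) (b := (q : ℤ)) (c := 1)
    rw [← h']
    exact Int.emod_eq_of_lt (by omega) (by omega)

/-- For a primitive Dirichlet character `χ` modulo `q ≥ 3`, with `τ` the Gauss sum of the
conjugate character, `∑_{n=1}^N χ(n) = (1/τ) ∑_{0<|a|<q/2} χ̄(a) (e(aN/q) − 1)/(1 − e(−a/q))`. -/
theorem sum_char_eq_gauss_expansion (q : ℕ) (hq : 3 ≤ q) (χ : DirichletCharacter ℂ q)
    (hχ : χ.IsPrimitive) (N : ℕ) (hN : 0 < N) :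
    ∑ n ∈ Finset.Icc 1 N, χ (n : ZMod q) =
      (1 / ∑ b ∈ Finset.range q, (starRingEnd ℂ) (χ (b : ZMod q)) * e ((b : ℝ) / q)) *
        ∑ a ∈ (Finset.Icc (-(q : ℤ)) (q : ℤ)).filter (fun a : ℤ => a ≠ 0 ∧ 2 * |a| < (q : ℤ)),
          (starRingEnd ℂ) (χ (a : ZMod q)) *
            ((e ((a : ℝ) * N / q) - 1) / (1 - e (-(a : ℝ) / q))) := by
  have hq0 : NeZero q := ⟨by omega⟩
  have hqnt : Nontrivial (ZMod q) := ZMod.nontrivial_iff.mpr (by omega)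
  set ψ : AddChar (ZMod q) ℂ := ZMod.stdAddChar with hψ
  have hχinv : (χ⁻¹).IsPrimitive := isPrimitive_inv hχ
  set τ : ℂ := gaussSum χ⁻¹ ψ with hτ
  have hτne : τ ≠ 0 := gauss_ne_zero hχinv
  -- conjugation of character values
  have hstar : ∀ x : ZMod q, (starRingEnd ℂ) (χ x) = χ⁻¹ x := fun x => by
    rw [starRingEnd_apply, MulChar.star_apply']
  -- the b-sum equals τ
  have hbsum : (∑ b ∈ Finset.range q, (starRingEnd ℂ) (χ (b : ZMod q)) * e ((b : ℝ) / q)) = τ := by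
    rw [hτ, gaussSum]
    refine Finset.sum_nbij' (fun b => (b : ZMod q)) (fun y => y.val) ?_ ?_ ?_ ?_ ?_
    · intro b _; exact Finset.mem_univ _
    · intro y _
      exact Finset.mem_range.mpr (ZMod.val_lt y)
    · intro b hb
      exact ZMod.val_natCast_of_lt (Finset.mem_range.mp hb)
    · intro y _
      exact ZMod.natCast_zmod_val y
    · intro b _
      have he : e ((b : ℝ) / q) = ψ ((b : ZMod q)) := by
        have := e_int_div q (b : ℤ)
        push_cast at this ⊢
        rw [this]
      rw [hstar, he]
  -- the function on residues
  set G : ZMod q → ℂ := fun y => χ⁻¹ y * ((ψ (y * (N : ZMod q)) - 1) / (1 - ψ (-y))) with hG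
  -- each a-term equals G of its residue class
  have haterm : ∀ a : ℤ,
      (starRingEnd ℂ) (χ (a : ZMod q)) * ((e ((a : ℝ) * N / q) - 1) / (1 - e (-(a : ℝ) / q)))
        = G ((a : ZMod q)) := by
    intro a
    have h1 : e ((a : ℝ) * N / q) = ψ ((a : ZMod q) * (N : ZMod q)) := by
      have := e_int_div q (a * N)
      push_cast at this ⊢
      rw [← this]
    have h2 : e (-(a : ℝ) / q) = ψ (-(a : ZMod q)) := by
      have := e_int_div q (-a)
      push_cast at this ⊢
      rw [← this]
    rw [hstar, h1, h2, hG]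
  -- the filtered set in ℤ and the filtered set in ZMod q
  set S := (Finset.Icc (-(q : ℤ)) (q : ℤ)).filter (fun a : ℤ => a ≠ 0 ∧ 2 * |a| < (q : ℤ))
    with hS
  set U := Finset.univ.filter (fun y : ZMod q => y.val ≠ 0 ∧ 2 * y.val ≠ q) with hU
  have hSmem : ∀ a : ℤ, a ∈ S ↔ (-(q:ℤ) ≤ a ∧ a ≤ q) ∧ a ≠ 0 ∧ (-(q:ℤ) < 2*a ∧ 2*a < q) := by
    intro a
    rw [hS, Finset.mem_filter, Finset.mem_Icc]
    constructor
    · rintro ⟨⟨h1, h2⟩, h3, h4⟩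
      rw [show (2:ℤ) * |a| = |2*a| by rw [abs_mul]; simp, abs_lt] at h4
      exact ⟨⟨h1, h2⟩, h3, h4⟩
    · rintro ⟨⟨h1, h2⟩, h3, h4⟩
      refine ⟨⟨h1, h2⟩, h3, ?_⟩
      rw [show (2:ℤ) * |a| = |2*a| by rw [abs_mul]; simp, abs_lt]
      exact h4
  have hval : ∀ a : ℤ, (((a : ZMod q)).val : ℤ) = a % q := fun a => ZMod.val_intCast a
  -- sum over S = sum over U
  have hSU : ∑ a ∈ S, G ((a : ZMod q)) = ∑ y ∈ U, G y := by
    refine Finset.sum_nbij' (fun a => (a : ZMod q))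
      (fun y => if 2 * y.val < q then (y.val : ℤ) else (y.val : ℤ) - q) ?_ ?_ ?_ ?_ ?_
    · intro a ha
      rw [hSmem] at ha
      obtain ⟨⟨h1, h2⟩, h3, h4, h5⟩ := ha
      rw [hU, Finset.mem_filter]
      refine ⟨Finset.mem_univ _, ?_, ?_⟩
      · intro h
        have hv := hval a
        rcases emod_cases (q := q) (a := a) (by omega) (by omega) with ⟨h', hm⟩ | ⟨h', hm⟩ <;>
          omega
      · intro h
        have hv := hval a
        rcases emod_cases (q := q) (a := a) (by omega) (by omega) with ⟨h', hm⟩ | ⟨h', hm⟩ <;>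
          omega
    · intro y hy
      rw [hU, Finset.mem_filter] at hy
      obtain ⟨_, h1, h2⟩ := hy
      have hvlt : y.val < q := ZMod.val_lt y
      rw [hSmem]
      split_ifs with h
      · constructor
        · omega
        · constructor
          · exact_mod_cast h1
          · omega
      · refine ⟨by omega, by omega, by omega, by omega⟩
    · intro a ha
      rw [hSmem] at ha
      obtain ⟨⟨h1, h2⟩, h3, h4, h5⟩ := ha
      have hv := hval a
      split_ifs with h <;>
        rcases emod_cases (q := q) (a := a) (by omega) (by omega) with ⟨h', hm⟩ | ⟨h', hm⟩ <;>
          omega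
    · intro y hy
      rw [hU, Finset.mem_filter] at hy
      split_ifs with h
      · push_cast
        exact ZMod.natCast_zmod_val y
      · push_cast
        simp only [ZMod.natCast_self, sub_zero]
        exact ZMod.natCast_zmod_val y
    · intro a _
      rfl
  -- extend U to all of ZMod q
  have hUuniv : ∑ y ∈ U, G y = ∑ y : ZMod q, G y := by
    refine Finset.sum_subset (Finset.filter_subset _ _) ?_
    intro y _ hy
    rw [hU, Finset.mem_filter] at hy
    push_neg at hy
    have hy' := hy (Finset.mem_univ y)
    have hnu : χ⁻¹ y = 0 := by
      by_cases h0 : y.val = 0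
      · have : y = 0 := by
          rwa [ZMod.val_eq_zero] at h0
        rw [this]
        exact (χ⁻¹).map_nonunit (by simpa using not_isUnit_zero)
      · have h2 : 2 * y.val = q := hy' h0
        refine (χ⁻¹).map_nonunit ?_
        intro hu
        rw [← ZMod.natCast_zmod_val y, ZMod.isUnit_iff_coprime] at hu
        have hdvd : y.val ∣ q := ⟨2, by omega⟩
        have := Nat.Coprime.eq_one_of_dvd hu hdvd
        omega
    rw [hG]
    simp only [hnu, zero_mul]
  -- rewrite G y as a geometric sum
  have hGsum : ∀ y : ZMod q, G y = ∑ n ∈ Finset.Icc 1 N, χ⁻¹ y * ψ ((n : ZMod q) * y) := by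
    intro y
    by_cases hy : y = 0
    · have h0 : χ⁻¹ y = 0 := by
        rw [hy]
        exact (χ⁻¹).map_nonunit (by simpa using not_isUnit_zero)
      rw [hG]
      simp only [h0, zero_mul, Finset.sum_const_zero]
    · have hz1 : ψ y ≠ 1 := by
        intro h
        apply hy
        have : ψ y = ψ 0 := by rw [h, AddChar.map_zero_eq_one]
        exact ZMod.injective_stdAddChar this
      have hz0 : ψ y ≠ 0 := by
        have hmul : ψ y * ψ (-y) = 1 := by
          rw [← AddChar.map_add_eq_mul, add_neg_cancel, AddChar.map_zero_eq_one]
        exact left_ne_zero_of_mul_eq_one hmul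
      have hpow : ∀ n : ℕ, ψ ((n : ZMod q) * y) = (ψ y) ^ n := fun n => by
        rw [← nsmul_eq_mul, AddChar.map_nsmul_eq_pow]
      rw [hG]
      dsimp only
      have hN' : ψ (y * (N : ZMod q)) = (ψ y) ^ N := by rw [mul_comm]; exact hpow N
      have hneg : ψ (-y) = (ψ y)⁻¹ := AddChar.map_neg_eq_inv ψ y
      rw [hN', hneg, ← geom_Icc hz0 hz1 N, Finset.mul_sum]
      exact Finset.sum_congr rfl fun n _ => by rw [hpow]
  -- swap sums and evaluate inner gauss sums
  have hswap : ∑ y : ZMod q, G y = (∑ n ∈ Finset.Icc 1 N, χ (n : ZMod q)) * τ := by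
    calc ∑ y : ZMod q, G y
        = ∑ y : ZMod q, ∑ n ∈ Finset.Icc 1 N, χ⁻¹ y * ψ ((n : ZMod q) * y) := by
          exact Finset.sum_congr rfl fun y _ => hGsum y
      _ = ∑ n ∈ Finset.Icc 1 N, ∑ y : ZMod q, χ⁻¹ y * ψ ((n : ZMod q) * y) :=
          Finset.sum_comm
      _ = ∑ n ∈ Finset.Icc 1 N, χ (n : ZMod q) * τ := by
          refine Finset.sum_congr rfl fun n _ => ?_
          have : ∑ y : ZMod q, χ⁻¹ y * ψ ((n : ZMod q) * y)
              = gaussSum χ⁻¹ (ψ.mulShift (n : ZMod q)) := by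
            rw [gaussSum]
            exact Finset.sum_congr rfl fun y _ => by rw [AddChar.mulShift_apply]
          rw [this, gaussSum_mulShift_of_isPrimitive ψ hχinv, inv_inv, hτ]
      _ = (∑ n ∈ Finset.Icc 1 N, χ (n : ZMod q)) * τ := by
          rw [Finset.sum_mul]
  -- put everything together
  rw [hbsum]
  have hrhs : (∑ a ∈ S, (starRingEnd ℂ) (χ (a : ZMod q)) *
      ((e ((a : ℝ) * N / q) - 1) / (1 - e (-(a : ℝ) / q))))
      = (∑ n ∈ Finset.Icc 1 N, χ (n : ZMod q)) * τ := by
    calc ∑ a ∈ S, (starRingEnd ℂ) (χ (a : ZMod q)) *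
        ((e ((a : ℝ) * N / q) - 1) / (1 - e (-(a : ℝ) / q)))
        = ∑ a ∈ S, G ((a : ZMod q)) := Finset.sum_congr rfl fun a _ => haterm a
      _ = ∑ y ∈ U, G y := hSU
      _ = ∑ y : ZMod q, G y := hUuniv
      _ = (∑ n ∈ Finset.Icc 1 N, χ (n : ZMod q)) * τ := hswap
  rw [hrhs, one_div, mul_comm _ τ, ← mul_assoc, inv_mul_cancel₀ hτne, one_mul]
end

section
/- Let χ be a primitive Dirichlet character modulo q. Then |∑_{n=1}^N χ(n)| ≤ (√q/(2π)) |∑_{0<|a|<q/2} χ̄(a)(e(aN/q) − 1)/a| + O(√q), with an absolute implied constant. -/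
open Complex

open Finset

lemma cot_sub_bound_pos {x : ℝ} (h0 : 0 < x) (h2 : x ≤ Real.pi / 2) :
    |Real.cos x / Real.sin x - 1 / x| ≤ 8 / 3 := by
  have hpi := Real.pi_gt_three
  have hpi2 := Real.pi_lt_d2
  have hjordan : 3 / 5 * x ≤ Real.sin x := by
    have h := Real.mul_abs_le_abs_sin (x := x) (by rw [_root_.abs_of_pos h0]; exact h2)
    rw [_root_.abs_of_pos h0,
      _root_.abs_of_nonneg (Real.sin_nonneg_of_nonneg_of_le_pi h0.le (by linarith))] at h
    have : (3:ℝ)/5 ≤ 2 / Real.pi := by rw [le_div_iff₀ (by linarith)]; nlinarith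
    nlinarith
  have hsin : 0 < Real.sin x := lt_of_lt_of_le (by nlinarith) hjordan
  rcases le_or_gt x 1 with hle | hgt
  · -- small x
    have hcos : |Real.cos x - 1| ≤ x ^ 2 / 2 := by
      rw [abs_sub_comm, _root_.abs_of_nonneg (by nlinarith [Real.cos_le_one x])]
      nlinarith [Real.one_sub_sq_div_two_le_cos (x := x)]
    have hsin3 : x - Real.sin x ≤ x ^ 3 / 4 := by
      nlinarith [Real.sin_gt_sub_cube h0]
    have hsinle : Real.sin x ≤ x := Real.sin_le h0.le
    have hnum : |x * Real.cos x - Real.sin x| ≤ 3 / 4 * x ^ 3 := by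
      have h1 : |x * Real.cos x - x| ≤ x ^ 3 / 2 := by
        have h' : x * Real.cos x - x = x * (Real.cos x - 1) := by ring
        rw [h', abs_mul, _root_.abs_of_pos h0]
        nlinarith
      calc |x * Real.cos x - Real.sin x|
          ≤ |x * Real.cos x - x| + |x - Real.sin x| := abs_sub_le _ _ _
        _ ≤ x ^ 3 / 2 + x ^ 3 / 4 := by
            refine add_le_add h1 ?_
            rw [_root_.abs_of_nonneg (by linarith)]; exact hsin3
        _ = 3 / 4 * x ^ 3 := by ring
    have key : Real.cos x / Real.sin x - 1 / x
        = (x * Real.cos x - Real.sin x) / (Real.sin x * x) := by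
      field_simp
    rw [key, abs_div, _root_.abs_of_pos (mul_pos hsin h0)]
    rw [div_le_iff₀ (mul_pos hsin h0)]
    calc |x * Real.cos x - Real.sin x| ≤ 3 / 4 * x ^ 3 := hnum
      _ ≤ 8 / 3 * (Real.sin x * x) := by nlinarith
  · -- big x
    have hsin1 : (3:ℝ) / 5 ≤ Real.sin x := by nlinarith
    have h1 : |Real.cos x / Real.sin x| ≤ 5 / 3 := by
      rw [abs_div, _root_.abs_of_pos hsin, div_le_iff₀ hsin]
      nlinarith [Real.abs_cos_le_one x]
    have h2' : |1 / x| ≤ 1 := by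
      rw [abs_div, abs_one, _root_.abs_of_pos h0, div_le_one h0]; linarith
    calc |Real.cos x / Real.sin x - 1 / x| ≤ |Real.cos x / Real.sin x| + |1 / x| := abs_sub _ _
      _ ≤ 5 / 3 + 1 := add_le_add h1 h2'
      _ ≤ 8 / 3 := by norm_num

lemma cot_sub_bound {x : ℝ} (h0 : x ≠ 0) (h2 : |x| ≤ Real.pi / 2) :
    |Real.cos x / Real.sin x - 1 / x| ≤ 8 / 3 := by
  rcases lt_or_gt_of_ne h0 with hneg | hpos
  · have h := cot_sub_bound_pos (x := -x) (by linarith) (by rwa [_root_.abs_of_neg hneg] at h2)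
    rw [Real.cos_neg, Real.sin_neg] at h
    have heq : Real.cos x / -Real.sin x - 1 / -x = -(Real.cos x / Real.sin x - 1 / x) := by
      rw [div_neg, div_neg]; ring
    rwa [heq, abs_neg] at h
  · exact cot_sub_bound_pos hpos (by rwa [_root_.abs_of_pos hpos] at h2)

lemma abs_e (t : ℝ) : ‖e t‖ = 1 := by
  rw [e, Complex.norm_exp]
  have h : (2 * ↑Real.pi * I * ↑t).re = 0 := by simp
  rw [h, Real.exp_zero]

lemma two_pi_I_ne : (2 * ↑Real.pi * I : ℂ) ≠ 0 := by
  simp [Real.pi_ne_zero]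

lemma e_ne_one {θ : ℝ} (h0 : θ ≠ 0) (h : |θ| < 1) : e θ ≠ 1 := by
  intro hone
  rw [e, Complex.exp_eq_one_iff] at hone
  obtain ⟨n, hn⟩ := hone
  have h2 : (2 * ↑Real.pi * I : ℂ) ≠ 0 := two_pi_I_ne
  have hθn : (θ:ℂ) = (n:ℂ) :=
    mul_left_cancel₀ h2 (by linear_combination hn)
  have hθn' : θ = (n:ℝ) := by exact_mod_cast hθn
  rcases eq_or_ne n 0 with h1 | h1
  · exact h0 (by simpa [h1] using hθn')
  · have : (1:ℝ) ≤ |(n:ℝ)| := by exact_mod_cast Int.one_le_abs (by simpa using h1)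
    rw [← hθn'] at this; linarith

lemma key_ptwise {θ : ℝ} (h0 : θ ≠ 0) (hhalf : |θ| ≤ 1/2) :
    ‖e θ / (e θ - 1) - 1 / (2 * Real.pi * I * θ)‖ ≤ 2 := by
  have hpi := Real.pi_gt_three
  obtain ⟨x, hxdef⟩ : ∃ x : ℝ, x = Real.pi * θ := ⟨_, rfl⟩
  have hx0 : x ≠ 0 := by rw [hxdef]; exact mul_ne_zero Real.pi_ne_zero h0
  have hxabs : |x| ≤ Real.pi / 2 := by
    rw [hxdef, abs_mul, _root_.abs_of_pos Real.pi_pos]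
    nlinarith [abs_nonneg θ]
  have hsin0 : Real.sin x ≠ 0 := by
    intro hs
    have := Real.mul_abs_le_abs_sin hxabs
    rw [hs, abs_zero] at this
    have h2p : 0 < 2 / Real.pi := by positivity
    have habs : 0 < |x| := abs_pos.mpr hx0
    nlinarith
  set c : ℂ := (Real.cos x : ℂ)
  set s : ℂ := (Real.sin x : ℂ)
  have hs : s ≠ 0 := Complex.ofReal_ne_zero.mpr hsin0
  have hxc : (x:ℂ) ≠ 0 := Complex.ofReal_ne_zero.mpr hx0
  have hexp : Complex.exp (↑x * I) = c + s * I := by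
    rw [Complex.exp_mul_I, ← Complex.ofReal_cos, ← Complex.ofReal_sin]
  have h1 : e θ = (c + s * I) ^ 2 := by
    rw [← hexp, ← Complex.exp_nat_mul, e]
    congr 1
    rw [hxdef]
    push_cast
    ring
  have pyth : c ^ 2 + s ^ 2 = 1 := by
    rw [← Complex.ofReal_pow, ← Complex.ofReal_pow, ← Complex.ofReal_add]
    norm_cast
    rw [add_comm]
    exact Real.sin_sq_add_cos_sq x
  have h2 : e θ - 1 = 2 * s * I * (c + s * I) := by
    rw [h1]; linear_combination pyth - s ^ 2 * Complex.I_sq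
  have hA : c + s * I ≠ 0 := by rw [← hexp]; exact Complex.exp_ne_zero _
  have hI : (I:ℂ) ≠ 0 := Complex.I_ne_zero
  have h3 : e θ / (e θ - 1) = (c + s * I) / (2 * s * I) := by
    rw [h2, h1, sq]
    field_simp
  have hxeq : (2 * ↑Real.pi * I * ↑θ : ℂ) = 2 * ↑x * I := by
    rw [hxdef]; push_cast; ring
  have hcast : ((Real.cos x / Real.sin x - 1 / x : ℝ) : ℂ) = c / s - 1 / (x:ℂ) := by
    rw [Complex.ofReal_sub, Complex.ofReal_div, Complex.ofReal_div, Complex.ofReal_one]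
  have h4 : e θ / (e θ - 1) - 1 / (2 * Real.pi * I * θ)
      = ((Real.cos x / Real.sin x - 1 / x : ℝ) : ℂ) / (2 * I) + 1 / 2 := by
    rw [h3, hxeq, hcast]
    field_simp
    ring_nf
  rw [h4]
  have hr := cot_sub_bound hx0 hxabs
  have habs2I : ‖2 * I‖ = 2 := by simp
  calc ‖((Real.cos x / Real.sin x - 1 / x : ℝ) : ℂ) / (2 * I) + 1 / 2‖
      ≤ ‖((Real.cos x / Real.sin x - 1 / x : ℝ) : ℂ) / (2 * I)‖
        + ‖1 / 2‖ := norm_add_le _ _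
    _ = |Real.cos x / Real.sin x - 1 / x| / 2 + 1 / 2 := by
        rw [norm_div, Complex.norm_real, Real.norm_eq_abs, habs2I]
        norm_num
    _ ≤ (8 / 3) / 2 + 1 / 2 := by linarith
    _ ≤ 2 := by norm_num

lemma abs_e_sub_one_le (t : ℝ) : ‖e t - 1‖ ≤ 2 := by
  calc ‖e t - 1‖ ≤ ‖e t‖ + ‖(1:ℂ)‖ := by
        simpa [sub_eq_add_neg] using norm_add_le (e t) (-1)
    _ ≤ 2 := by rw [abs_e]; norm_num

lemma geom_err {q : ℕ} [NeZero q] (hq : 3 ≤ q) {a : ℤ} (ha : a ≠ 0)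
    (h2a : 2 * |a| < (q : ℤ)) (N : ℕ) :
    ‖(∑ n ∈ Finset.Icc 1 N, ZMod.stdAddChar ((n : ZMod q) * (a : ZMod q)))
      - (e ((a : ℝ) * N / q) - 1) * ((q : ℂ) / (2 * Real.pi * I * a))‖ ≤ 4 := by
  have hqR : (0:ℝ) < q := by positivity
  have hq0 : (q:ℂ) ≠ 0 := by exact_mod_cast hqR.ne'
  have haC : (a:ℂ) ≠ 0 := by exact_mod_cast ha
  have haR : (a:ℝ) ≠ 0 := by exact_mod_cast ha
  set θ : ℝ := (a : ℝ) / q with hθdef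
  have hθ0 : θ ≠ 0 := div_ne_zero haR hqR.ne'
  have hθhalf : |θ| ≤ 1/2 := by
    rw [hθdef, abs_div, _root_.abs_of_pos hqR, div_le_iff₀ hqR]
    have : |(a:ℝ)| = ((|a| : ℤ) : ℝ) := by push_cast; rfl
    rw [this]
    have h2a' : ((2 * |a| : ℤ) : ℝ) ≤ ((q:ℤ) : ℝ) := by exact_mod_cast h2a.le
    push_cast at h2a' ⊢
    linarith
  have hz1 : e θ ≠ 1 := e_ne_one hθ0 (lt_of_le_of_lt hθhalf (by norm_num))
  set z : ℂ := e θ with hzdef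
  have hterm : ∀ n : ℕ, ZMod.stdAddChar ((n : ZMod q) * (a : ZMod q)) = z ^ n := by
    intro n
    have h1 : ((n : ZMod q) * (a : ZMod q)) = (((n * a : ℤ)) : ZMod q) := by push_cast; ring
    rw [h1, ZMod.stdAddChar_coe, hzdef, e, ← Complex.exp_nat_mul]
    congr 1
    rw [hθdef]
    push_cast
    field_simp
  have hzN : z ^ N = e ((a : ℝ) * N / q) := by
    rw [hzdef, e, e, ← Complex.exp_nat_mul]
    congr 1
    rw [hθdef]
    push_cast
    field_simp
  have hgeom : (∑ n ∈ Finset.Icc 1 N, ZMod.stdAddChar ((n : ZMod q) * (a : ZMod q)))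
      = (e ((a : ℝ) * N / q) - 1) * (z / (z - 1)) := by
    have h1 : Finset.Icc 1 N = Finset.Ico 1 (N + 1) := by
      exact (Finset.Ico_add_one_right_eq_Icc 1 N).symm
    calc (∑ n ∈ Finset.Icc 1 N, ZMod.stdAddChar ((n : ZMod q) * (a : ZMod q)))
        = ∑ n ∈ Finset.Ico 1 (N+1), z ^ n := by rw [← h1]; exact Finset.sum_congr rfl fun n _ => hterm n
      _ = (z ^ (N+1) - z ^ 1) / (z - 1) := geom_sum_Ico hz1 (by omega)
      _ = (z ^ N - 1) * (z / (z - 1)) := by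
          rw [mul_div_assoc']
          congr 1
          ring
      _ = (e ((a : ℝ) * N / q) - 1) * (z / (z - 1)) := by rw [hzN]
  have hfrac : (q : ℂ) / (2 * Real.pi * I * a) = 1 / (2 * Real.pi * I * (θ:ℂ)) := by
    rw [hθdef]
    push_cast
    have hπ : (Real.pi : ℂ) ≠ 0 := by exact_mod_cast Real.pi_ne_zero
    field_simp
  rw [hgeom, hfrac, ← mul_sub]
  rw [norm_mul]
  have h2 : ‖z / (z - 1) - 1 / (2 * Real.pi * I * (θ:ℂ))‖ ≤ 2 := key_ptwise hθ0 hθhalf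
  calc ‖e ((a:ℝ) * N / q) - 1‖ * ‖z / (z-1) - 1 / (2 * Real.pi * I * (θ:ℂ))‖
      ≤ 2 * 2 := by
        refine mul_le_mul (abs_e_sub_one_le _) h2 (by positivity) (by norm_num)
    _ = 4 := by norm_num

lemma abs_gaussSum {q : ℕ} [NeZero q] (χ : DirichletCharacter ℂ q) (hχ : χ.IsPrimitive) :
    ‖gaussSum χ ZMod.stdAddChar‖ = Real.sqrt q := by
  classical
  set ψ := ZMod.stdAddChar (N := q) with hψdef
  have hψ : ψ.IsPrimitive := ZMod.isPrimitive_stdAddChar q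
  set τ := gaussSum χ ψ with hτdef
  have key : ∀ n : ZMod q, (∑ x : ZMod q, χ x * ψ (n * x)) = χ⁻¹ n * τ := by
    intro n
    have h := gaussSum_mulShift_of_isPrimitive ψ hχ n
    rw [← h, gaussSum]
    simp only [AddChar.mulShift_apply]
  have hconj : ∀ t : ZMod q, (starRingEnd ℂ) (ψ t) = ψ (-t) := by
    intro t
    have habs : ‖ψ t‖ = 1 := by
      rw [hψdef, ZMod.stdAddChar_apply, Circle.norm_coe]
    rw [← Complex.inv_eq_conj habs, ← AddChar.map_neg_eq_inv]
  have inner : ∀ x y : ZMod q, (∑ n : ZMod q, ψ (n * (x - y))) = if x = y then (q:ℂ) else 0 := by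
    intro x y
    have h := AddChar.sum_mulShift (ψ := ψ) (x - y) hψ
    rw [h, ZMod.card]
    by_cases hxy : x = y <;> simp [hxy, sub_eq_zero]
  have calc1 : (∑ n : ZMod q, χ⁻¹ n * (starRingEnd ℂ) (χ⁻¹ n)) * (τ * (starRingEnd ℂ) τ)
      = (q:ℂ) * ∑ x : ZMod q, χ x * (starRingEnd ℂ) (χ x) := by
    calc (∑ n : ZMod q, χ⁻¹ n * (starRingEnd ℂ) (χ⁻¹ n)) * (τ * (starRingEnd ℂ) τ)
        = ∑ n : ZMod q, (χ⁻¹ n * τ) * (starRingEnd ℂ) (χ⁻¹ n * τ) := by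
          rw [Finset.sum_mul]
          exact Finset.sum_congr rfl fun n _ => by rw [map_mul]; ring
      _ = ∑ n : ZMod q, (∑ x : ZMod q, χ x * ψ (n * x))
            * (starRingEnd ℂ) (∑ x : ZMod q, χ x * ψ (n * x)) := by
          simp_rw [key]
      _ = ∑ n : ZMod q, ∑ x : ZMod q, ∑ y : ZMod q,
            (χ x * (starRingEnd ℂ) (χ y)) * ψ (n * (x - y)) := by
          refine Finset.sum_congr rfl fun n _ => ?_
          rw [map_sum, Finset.sum_mul_sum]
          refine Finset.sum_congr rfl fun x _ => Finset.sum_congr rfl fun y _ => ?_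
          have hc : (starRingEnd ℂ) (χ y * ψ (n * y))
              = (starRingEnd ℂ) (χ y) * ψ (-(n * y)) := by
            rw [map_mul, hconj]
          rw [hc, mul_mul_mul_comm]
          congr 1
          rw [← AddChar.map_add_eq_mul]
          congr 1
          ring
      _ = ∑ x : ZMod q, ∑ y : ZMod q,
            (χ x * (starRingEnd ℂ) (χ y)) * ∑ n : ZMod q, ψ (n * (x - y)) := by
          rw [Finset.sum_comm]
          refine Finset.sum_congr rfl fun x _ => ?_
          rw [Finset.sum_comm]
          refine Finset.sum_congr rfl fun y _ => ?_
          rw [Finset.mul_sum]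
      _ = ∑ x : ZMod q, ∑ y : ZMod q,
            (χ x * (starRingEnd ℂ) (χ y)) * (if x = y then (q:ℂ) else 0) := by
          simp_rw [inner]
      _ = (q:ℂ) * ∑ x : ZMod q, χ x * (starRingEnd ℂ) (χ x) := by
          rw [Finset.mul_sum]
          refine Finset.sum_congr rfl fun x _ => ?_
          simp only [mul_ite, mul_zero]
          rw [Finset.sum_ite_eq Finset.univ x (fun y => χ x * (starRingEnd ℂ) (χ y) * (q:ℂ))]
          simp [mul_comm]
  have hterm : ∀ (φ : DirichletCharacter ℂ q) (x : ZMod q),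
      φ x * (starRingEnd ℂ) (φ x) = if IsUnit x then (1:ℂ) else 0 := by
    intro φ x
    by_cases h : IsUnit x
    · have h1 : ‖φ x‖ = 1 := by
        have h2 := DirichletCharacter.unit_norm_eq_one φ h.unit
        rwa [h.unit_spec] at h2
      rw [Complex.mul_conj, Complex.normSq_eq_norm_sq, h1]
      simp [h]
    · rw [φ.map_nonunit h]
      simp [h]
  have hA : (∑ n : ZMod q, χ⁻¹ n * (starRingEnd ℂ) (χ⁻¹ n))
      = ∑ x : ZMod q, (if IsUnit x then (1:ℂ) else 0) :=
    Finset.sum_congr rfl fun n _ => hterm χ⁻¹ n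
  have hB : (∑ x : ZMod q, χ x * (starRingEnd ℂ) (χ x))
      = ∑ x : ZMod q, (if IsUnit x then (1:ℂ) else 0) :=
    Finset.sum_congr rfl fun n _ => hterm χ n
  set U : ℂ := ∑ x : ZMod q, (if IsUnit x then (1:ℂ) else 0) with hUdef
  have hUne : U ≠ 0 := by
    rw [hUdef, Finset.sum_boole]
    rw [Nat.cast_ne_zero]
    exact Finset.card_ne_zero_of_mem
      (Finset.mem_filter.mpr ⟨Finset.mem_univ (1 : ZMod q), isUnit_one⟩)
  rw [hA, hB] at calc1
  have hmc : τ * (starRingEnd ℂ) τ = (q:ℂ) :=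
    mul_left_cancel₀ hUne (by linear_combination calc1)
  have hns : (Complex.normSq τ : ℂ) = (q:ℂ) := by rw [← Complex.mul_conj]; exact hmc
  have hns' : Complex.normSq τ = (q:ℝ) := by exact_mod_cast hns
  rw [Complex.norm_def, hns']

lemma sum_reindex {q : ℕ} [NeZero q] (hq : 3 ≤ q) (F : ZMod q → ℂ)
    (hF : ∀ x : ZMod q, ¬IsUnit x → F x = 0) :
    ∑ x : ZMod q, F x =
      ∑ a ∈ (Finset.Icc (-(q : ℤ)) (q : ℤ)).filter
        (fun a : ℤ => a ≠ 0 ∧ 2 * |a| < (q : ℤ)), F ((a : ZMod q)) := by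
  classical
  haveI : Fact (1 < q) := ⟨by omega⟩
  set A := (Finset.Icc (-(q : ℤ)) (q : ℤ)).filter
    (fun a : ℤ => a ≠ 0 ∧ 2 * |a| < (q : ℤ)) with hAdef
  have hinj : ∀ a ∈ A, ∀ b ∈ A, ((a : ZMod q) = (b : ZMod q)) → a = b := by
    intro a ha b hb hab
    rw [hAdef, Finset.mem_filter] at ha hb
    have hmod := (ZMod.intCast_eq_intCast_iff a b q).mp hab
    have hdvd : (q:ℤ) ∣ (b - a) := hmod.dvd
    have hz : b - a = 0 := Int.eq_zero_of_abs_lt_dvd hdvd (by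
      have h1 := ha.2.2
      have h2 := hb.2.2
      have h3 := abs_sub b a
      linarith)
    omega
  have himg : ∀ x : ZMod q, IsUnit x → x ∈ A.image (fun a : ℤ => (a : ZMod q)) := by
    intro x hx
    have hvlt : x.val < q := ZMod.val_lt x
    have hx0 : x ≠ 0 := hx.ne_zero
    have hv0 : x.val ≠ 0 := fun h => hx0 ((ZMod.val_eq_zero x).mp h)
    have hcast : ((x.val : ℤ) : ZMod q) = x := by
      push_cast
      exact ZMod.natCast_rightInverse x
    rcases lt_or_ge (2 * x.val) q with h2v | h2v
    · refine Finset.mem_image.mpr ⟨(x.val : ℤ), ?_, hcast⟩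
      rw [hAdef, Finset.mem_filter, Finset.mem_Icc]
      refine ⟨⟨by omega, by omega⟩, by omega, ?_⟩
      rw [_root_.abs_of_nonneg (by omega : (0:ℤ) ≤ (x.val:ℤ))]
      omega
    · have hne : 2 * x.val ≠ q := by
        intro heq
        have hcop := ZMod.val_coe_unit_coprime hx.unit
        rw [hx.unit_spec] at hcop
        have hdvd : x.val ∣ q := ⟨2, by omega⟩
        have h1 : x.val ∣ Nat.gcd x.val q := Nat.dvd_gcd dvd_rfl hdvd
        rw [Nat.Coprime] at hcop
        rw [hcop] at h1
        have h2 := Nat.eq_one_of_dvd_one h1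
        omega
      refine Finset.mem_image.mpr ⟨(x.val : ℤ) - q, ?_, by push_cast [ZMod.natCast_self]; simpa using hcast⟩
      rw [hAdef, Finset.mem_filter, Finset.mem_Icc]
      have h1 : ((x.val : ℤ)) < q := by exact_mod_cast hvlt
      refine ⟨⟨by omega, by omega⟩, by omega, ?_⟩
      rw [_root_.abs_of_nonpos (by omega : ((x.val:ℤ) - q) ≤ 0)]
      omega
  have himgsum : ∑ x ∈ A.image (fun a : ℤ => (a : ZMod q)), F x = ∑ a ∈ A, F ((a : ZMod q)) :=
    Finset.sum_image (fun a ha b hb hab => hinj a ha b hb hab)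
  rw [← himgsum]
  refine (Finset.sum_subset (Finset.subset_univ _) ?_).symm
  intro x _ hximg
  exact hF x fun hx => hximg (himg x hx)

/-- For a primitive Dirichlet character `χ` mod `q ≥ 3`,
`|∑_{n=1}^N χ(n)| ≤ (√q/(2π)) |∑_{0<|a|<q/2} χ̄(a)(e(aN/q) − 1)/a| + O(√q)`,
with an absolute implied constant. -/
theorem abs_sum_char_le : ∃ C : ℝ, 0 < C ∧
    ∀ (q : ℕ), 3 ≤ q → ∀ (χ : DirichletCharacter ℂ q), χ.IsPrimitive → ∀ (N : ℕ), 0 < N →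
      ‖∑ n ∈ Finset.Icc 1 N, χ (n : ZMod q)‖ ≤
        Real.sqrt q / (2 * Real.pi) *
          ‖∑ a ∈ (Finset.Icc (-(q : ℤ)) (q : ℤ)).filter
              (fun a : ℤ => a ≠ 0 ∧ 2 * |a| < (q : ℤ)),
            (starRingEnd ℂ) (χ (a : ZMod q)) * ((e ((a : ℝ) * N / q) - 1) / (a : ℂ))‖ +
          C * Real.sqrt q := by
  classical
  refine ⟨12, by norm_num, ?_⟩
  intro q hq χ hχ N hN
  haveI : NeZero q := ⟨by omega⟩
  have hqR : (0:ℝ) < q := by positivity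
  have hπ : (0:ℝ) < Real.pi := Real.pi_pos
  set ψ := ZMod.stdAddChar (N := q) with hψdef
  have hψ : ψ.IsPrimitive := ZMod.isPrimitive_stdAddChar q
  set τ := gaussSum χ ψ with hτdef
  have hτabs : ‖τ‖ = Real.sqrt q := abs_gaussSum χ hχ
  set A := (Finset.Icc (-(q : ℤ)) (q : ℤ)).filter
    (fun a : ℤ => a ≠ 0 ∧ 2 * |a| < (q : ℤ)) with hAdef
  set S := ∑ n ∈ Finset.Icc 1 N, χ ((n : ZMod q)) with hSdef
  set u := χ (-1 : ZMod q) * (starRingEnd ℂ) τ with hudef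
  set Sig := ∑ a ∈ A, (starRingEnd ℂ) (χ ((a : ZMod q)))
    * ((e ((a : ℝ) * N / q) - 1) / (a : ℂ)) with hSigdef
  -- conjugation facts
  have hstar : ∀ x : ZMod q, (starRingEnd ℂ) (χ x) = χ⁻¹ x := by
    intro x; rw [starRingEnd_apply]; exact MulChar.star_apply' χ x
  have hstar' : ∀ x : ZMod q, (starRingEnd ℂ) (χ⁻¹ x) = χ x := by
    intro x; rw [starRingEnd_apply]
    have h := MulChar.star_apply' χ⁻¹ x
    rwa [inv_inv] at h
  have hconj : ∀ t : ZMod q, (starRingEnd ℂ) (ψ t) = ψ (-t) := by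
    intro t
    have habs : ‖ψ t‖ = 1 := by
      rw [hψdef, ZMod.stdAddChar_apply, Circle.norm_coe]
    rw [← Complex.inv_eq_conj habs, ← AddChar.map_neg_eq_inv]
  -- Fourier expansion
  have key : ∀ m : ZMod q, (∑ x : ZMod q, χ x * ψ (m * x)) = χ⁻¹ m * τ := by
    intro m
    have h := gaussSum_mulShift_of_isPrimitive ψ hχ m
    rw [← h, gaussSum]
    simp only [AddChar.mulShift_apply]
  have key2 : ∀ m : ZMod q, (∑ x : ZMod q, χ⁻¹ x * ψ (m * x))
      = χ (-1 : ZMod q) * χ m * (starRingEnd ℂ) τ := by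
    intro m
    have h := congrArg (starRingEnd ℂ) (key (-m))
    rw [map_sum, map_mul] at h
    have hL : ∀ x : ZMod q, (starRingEnd ℂ) (χ x * ψ (-m * x)) = χ⁻¹ x * ψ (m * x) := by
      intro x
      rw [map_mul, hstar, hconj, neg_mul, neg_neg]
    rw [Finset.sum_congr rfl (fun x _ => hL x)] at h
    rw [h, hstar']
    rw [show (-m : ZMod q) = (-1 : ZMod q) * m by ring, map_mul]
  -- expansion of the partial sum
  have hSum : u * S = ∑ a ∈ A, χ⁻¹ ((a : ZMod q))
      * (∑ n ∈ Finset.Icc 1 N, ψ ((n : ZMod q) * (a : ZMod q))) := by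
    calc u * S
        = ∑ n ∈ Finset.Icc 1 N, (χ (-1 : ZMod q) * χ ((n : ZMod q)) * (starRingEnd ℂ) τ) := by
          rw [hSdef, Finset.mul_sum]
          exact Finset.sum_congr rfl fun n _ => by rw [hudef]; ring
      _ = ∑ n ∈ Finset.Icc 1 N, ∑ x : ZMod q, χ⁻¹ x * ψ ((n : ZMod q) * x) :=
          Finset.sum_congr rfl fun n _ => (key2 _).symm
      _ = ∑ n ∈ Finset.Icc 1 N, ∑ a ∈ A, χ⁻¹ ((a : ZMod q)) * ψ ((n : ZMod q) * (a : ZMod q)) := by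
          refine Finset.sum_congr rfl fun n _ => ?_
          rw [hAdef]
          exact sum_reindex hq (fun x => χ⁻¹ x * ψ ((n : ZMod q) * x))
            (fun x hx => by
              show χ⁻¹ x * ψ ((n : ZMod q) * x) = 0
              rw [MulChar.map_nonunit _ hx, zero_mul])
      _ = ∑ a ∈ A, χ⁻¹ ((a : ZMod q)) * ∑ n ∈ Finset.Icc 1 N, ψ ((n : ZMod q) * (a : ZMod q)) := by
          rw [Finset.sum_comm]
          exact Finset.sum_congr rfl fun a _ => by rw [Finset.mul_sum]
  set Main := ∑ a ∈ A, χ⁻¹ ((a : ZMod q))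
    * ((e ((a : ℝ) * N / q) - 1) * ((q : ℂ) / (2 * Real.pi * I * (a:ℂ)))) with hMdef
  -- error bound
  have hcard : (A.card : ℝ) ≤ 2 * q + 1 := by
    have h1 : A.card ≤ (Finset.Icc (-(q : ℤ)) (q : ℤ)).card := by
      rw [hAdef]; exact Finset.card_filter_le _ _
    have h2 : (Finset.Icc (-(q : ℤ)) (q : ℤ)).card = 2 * q + 1 := by
      rw [Int.card_Icc]
      omega
    rw [h2] at h1
    exact_mod_cast h1
  have hErr : ‖u * S - Main‖ ≤ 12 * q := by
    rw [hSum, hMdef, ← Finset.sum_sub_distrib]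
    calc ‖∑ a ∈ A, (χ⁻¹ ((a : ZMod q))
            * (∑ n ∈ Finset.Icc 1 N, ψ ((n : ZMod q) * (a : ZMod q)))
          - χ⁻¹ ((a : ZMod q)) * ((e ((a : ℝ) * N / q) - 1) * ((q : ℂ) / (2 * Real.pi * I * (a:ℂ)))))‖
        ≤ ∑ a ∈ A, ‖χ⁻¹ ((a : ZMod q))
            * (∑ n ∈ Finset.Icc 1 N, ψ ((n : ZMod q) * (a : ZMod q)))
          - χ⁻¹ ((a : ZMod q)) * ((e ((a : ℝ) * N / q) - 1) * ((q : ℂ) / (2 * Real.pi * I * (a:ℂ))))‖ :=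
          norm_sum_le _ _
      _ ≤ ∑ a ∈ A, 4 := by
          refine Finset.sum_le_sum fun a ha => ?_
          rw [hAdef, Finset.mem_filter] at ha
          rw [← mul_sub, norm_mul]
          have hb := geom_err (q := q) hq ha.2.1 ha.2.2 N
          have hc : ‖χ⁻¹ ((a : ZMod q))‖ ≤ 1 := by
            exact DirichletCharacter.norm_le_one χ⁻¹ _
          calc ‖χ⁻¹ ((a : ZMod q))‖ * ‖(∑ n ∈ Finset.Icc 1 N, ψ ((n : ZMod q) * (a : ZMod q))) - (e ((a : ℝ) * N / q) - 1) * ((q : ℂ) / (2 * Real.pi * I * (a:ℂ)))‖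
              ≤ 1 * 4 := mul_le_mul hc hb (by positivity) (by norm_num)
            _ = 4 := by norm_num
      _ = 4 * A.card := by rw [Finset.sum_const]; ring
      _ ≤ 12 * q := by
          have : (3:ℝ) ≤ q := by exact_mod_cast hq
          nlinarith
  -- main term
  have hMain : Main = ((q : ℂ) / (2 * Real.pi * I)) * Sig := by
    rw [hSigdef, Finset.mul_sum, hMdef]
    refine Finset.sum_congr rfl fun a ha => ?_
    rw [hAdef, Finset.mem_filter] at ha
    have haC : (a:ℂ) ≠ 0 := by exact_mod_cast ha.2.1
    have hπC : (Real.pi : ℂ) ≠ 0 := by exact_mod_cast Real.pi_ne_zero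
    rw [hstar]
    field_simp
  have habsMain : ‖Main‖ = (q / (2 * Real.pi)) * ‖Sig‖ := by
    rw [hMain, norm_mul, norm_div]
    congr 2
    · exact Complex.norm_natCast q
    · rw [norm_mul, norm_mul, Complex.norm_I, Complex.norm_real, Real.norm_eq_abs,
        _root_.abs_of_pos hπ]
      simp
  -- |u| = sqrt q
  have habsu : ‖u‖ = Real.sqrt q := by
    rw [hudef, norm_mul, Complex.norm_conj, hτabs]
    have hunit : IsUnit (-1 : ZMod q) := IsUnit.neg isUnit_one
    have h1 : ‖χ (-1 : ZMod q)‖ = 1 := by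
      have h2 := DirichletCharacter.unit_norm_eq_one χ hunit.unit
      rwa [hunit.unit_spec] at h2
    rw [h1, one_mul]
  -- put together
  have hsq : (0:ℝ) < Real.sqrt q := Real.sqrt_pos.mpr hqR
  have hfinal : Real.sqrt q * ‖S‖ ≤ (q / (2 * Real.pi)) * ‖Sig‖ + 12 * q := by
    have h1 : Real.sqrt q * ‖S‖ = ‖u * S‖ := by
      rw [norm_mul, habsu]
    rw [h1]
    calc ‖u * S‖ ≤ ‖Main‖ + ‖u * S - Main‖ := by
          have := norm_add_le Main (u * S - Main)
          simpa using this
      _ ≤ (q / (2 * Real.pi)) * ‖Sig‖ + 12 * q := by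
          rw [habsMain]
          exact add_le_add_right hErr _
  have hq_eq : (q:ℝ) = Real.sqrt q * Real.sqrt q := (Real.mul_self_sqrt hqR.le).symm
  calc ‖S‖ = (Real.sqrt q * ‖S‖) / Real.sqrt q := by
        field_simp
    _ ≤ ((q / (2 * Real.pi)) * ‖Sig‖ + 12 * q) / Real.sqrt q := by
        gcongr
    _ = Real.sqrt q / (2 * Real.pi) * ‖Sig‖ + 12 * Real.sqrt q := by
        have hsq2 : Real.sqrt (q:ℝ) ^ 2 = (q:ℝ) := Real.sq_sqrt hqR.le
        field_simp
        linear_combination (-1 : ℝ) * hsq2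
end

section
/- Let χ be a Dirichlet character modulo a prime p, let r, s be coprime integers with s ≥ 1, and define T(u) = ∑_{n≤u} χ(n) e(rn/s). Then T(u) = ∑_{dt=s} (χ(d)/φ(t)) ∑_{ψ mod t} (∑_{1≤a≤t} e(ra/t) ψ̄(a)) (∑_{m ≤ u/d} χ(m) ψ(m)), where the sum over ψ runs over all Dirichlet characters modulo t. -/
open Complex

private lemma e_congr {t : ℕ} (ht : 0 < t) (r : ℕ) {a b : ℕ} (h : a % t = b % t) :
    e ((r : ℝ) * a / t) = e ((r : ℝ) * b / t) := by
  obtain ⟨k, hk⟩ : (t : ℤ) ∣ (b : ℤ) - a := (Nat.ModEq.dvd h)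
  have hb : (b : ℝ) = a + t * k := by
    have : (b : ℤ) = a + t * k := by linarith [hk]
    exact_mod_cast congrArg (Int.cast : ℤ → ℝ) this
  have ht' : (t : ℝ) ≠ 0 := Nat.cast_ne_zero.mpr ht.ne'
  rw [e, e, Complex.exp_eq_exp_iff_exists_int]
  refine ⟨-(r * k), ?_⟩
  have hr : (r : ℝ) * a / t = (r : ℝ) * b / t + ((-(r * k) : ℤ) : ℝ) := by
    rw [hb]; push_cast; field_simp; ring
  rw [hr]
  push_cast
  ring

private lemma rep_eq {t : ℕ} (ht : 0 < t) {x : ℕ} (h1 : 1 ≤ x) (h2 : x ≤ t) :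
    x = if x % t = 0 then t else x % t := by
  rcases eq_or_lt_of_le h2 with rfl | hlt
  · simp
  · rw [Nat.mod_eq_of_lt hlt, if_neg (by omega)]

private lemma sum_Icc_rep {t : ℕ} (ht : 0 < t) (m : ℕ) (f : ℕ → ℂ)
    (hf : ∀ a, a % t = m % t → f a = f m) :
    (∑ a ∈ Finset.Icc 1 t, if ((a : ZMod t) = (m : ZMod t)) then f a else 0) = f m := by
  set a₀ : ℕ := if m % t = 0 then t else m % t with ha₀
  have ha₀mod : a₀ % t = m % t := by
    rcases eq_or_ne (m % t) 0 with h | h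
    · simp [ha₀, h, Nat.mod_self]
    · rw [ha₀, if_neg h, Nat.mod_eq_of_lt (Nat.mod_lt m ht)]
  have ha₀mem : a₀ ∈ Finset.Icc 1 t := by
    rcases eq_or_ne (m % t) 0 with h | h
    · rw [ha₀, if_pos h]; exact Finset.mem_Icc.mpr ⟨ht, le_rfl⟩
    · rw [Finset.mem_Icc, ha₀, if_neg h]
      exact ⟨Nat.one_le_iff_ne_zero.mpr h, le_of_lt (Nat.mod_lt m ht)⟩
  rw [Finset.sum_eq_single_of_mem a₀ ha₀mem]
  · rw [if_pos, hf a₀ ha₀mod]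
    rw [ZMod.natCast_eq_natCast_iff']
    exact ha₀mod
  · intro b hb hne
    rw [Finset.mem_Icc] at hb
    rw [if_neg]
    intro hcast
    rw [ZMod.natCast_eq_natCast_iff'] at hcast
    apply hne
    calc b = if b % t = 0 then t else b % t := rep_eq ht hb.1 hb.2
    _ = if m % t = 0 then t else m % t := by rw [hcast]
    _ = a₀ := rfl

private lemma orth (t : ℕ) [NeZero t] (a m : ℕ) :
    (∑ ψ : DirichletCharacter ℂ t, (starRingEnd ℂ) (ψ (a : ZMod t)) * ψ (m : ZMod t)) =
      if (IsUnit ((a : ℕ) : ZMod t) ∧ ((a : ZMod t) = (m : ZMod t))) then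
        ((t.totient : ℂ)) else 0 := by
  classical
  by_cases ha : IsUnit ((a : ℕ) : ZMod t)
  · have key := DirichletCharacter.sum_char_inv_mul_char_eq ℂ ha ((m : ℕ) : ZMod t)
    have hinv : Ring.inverse ((a : ℕ) : ZMod t) = (((a : ℕ) : ZMod t))⁻¹ := by
      rw [← ha.unit_spec, Ring.inverse_unit, ZMod.inv_coe_unit]
    have hconj : ∀ ψ : DirichletCharacter ℂ t,
        (starRingEnd ℂ) (ψ (a : ZMod t)) = ψ (((a : ℕ) : ZMod t))⁻¹ := by
      intro ψ
      rw [starRingEnd_apply, MulChar.star_apply' ψ, MulChar.inv_apply, hinv]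
    simp only [hconj]
    rw [key]
    by_cases h : ((a : ℕ) : ZMod t) = ((m : ℕ) : ZMod t)
    · rw [if_pos h, if_pos ⟨ha, h⟩]
    · rw [if_neg h, if_neg (fun hh => h hh.2)]
  · have hz : ∀ ψ : DirichletCharacter ℂ t, ψ ((a : ℕ) : ZMod t) = 0 := fun ψ =>
      ψ.map_nonunit ha
    simp [hz, ha]

open Classical in
private lemma inner_eq (p t : ℕ) (χ : DirichletCharacter ℂ p) (r : ℕ) (ht : 0 < t)
    (v : ℝ) :
    (1 / (t.totient : ℂ)) * ∑ ψ : DirichletCharacter ℂ t,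
        (∑ a ∈ Finset.Icc 1 t, e ((r : ℝ) * a / t) * (starRingEnd ℂ) (ψ (a : ZMod t))) *
          ∑ m ∈ Finset.Icc 1 ⌊v⌋₊, χ (m : ZMod p) * ψ (m : ZMod t) =
      ∑ m ∈ Finset.Icc 1 ⌊v⌋₊,
        if IsUnit ((m : ℕ) : ZMod t) then χ (m : ZMod p) * e ((r : ℝ) * m / t) else 0 := by
  classical
  haveI : NeZero t := ⟨ht.ne'⟩
  have htot : (t.totient : ℂ) ≠ 0 := Nat.cast_ne_zero.mpr (Nat.totient_pos.mpr ht).ne'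
  have step1 : ∑ ψ : DirichletCharacter ℂ t,
      (∑ a ∈ Finset.Icc 1 t, e ((r : ℝ) * a / t) * (starRingEnd ℂ) (ψ (a : ZMod t))) *
        (∑ m ∈ Finset.Icc 1 ⌊v⌋₊, χ (m : ZMod p) * ψ (m : ZMod t)) =
      ∑ m ∈ Finset.Icc 1 ⌊v⌋₊, ∑ a ∈ Finset.Icc 1 t,
        (e ((r : ℝ) * a / t) * χ (m : ZMod p)) *
          ∑ ψ : DirichletCharacter ℂ t,
            (starRingEnd ℂ) (ψ (a : ZMod t)) * ψ (m : ZMod t) := by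
    calc ∑ ψ : DirichletCharacter ℂ t,
        (∑ a ∈ Finset.Icc 1 t, e ((r : ℝ) * a / t) * (starRingEnd ℂ) (ψ (a : ZMod t))) *
          (∑ m ∈ Finset.Icc 1 ⌊v⌋₊, χ (m : ZMod p) * ψ (m : ZMod t))
        = ∑ ψ : DirichletCharacter ℂ t, ∑ a ∈ Finset.Icc 1 t, ∑ m ∈ Finset.Icc 1 ⌊v⌋₊,
            (e ((r : ℝ) * a / t) * χ (m : ZMod p)) *
              ((starRingEnd ℂ) (ψ (a : ZMod t)) * ψ (m : ZMod t)) := by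
          refine Finset.sum_congr rfl fun ψ _ => ?_
          rw [Finset.sum_mul_sum]
          exact Finset.sum_congr rfl fun a _ => Finset.sum_congr rfl fun m _ => by ring
      _ = ∑ a ∈ Finset.Icc 1 t, ∑ m ∈ Finset.Icc 1 ⌊v⌋₊, ∑ ψ : DirichletCharacter ℂ t,
            (e ((r : ℝ) * a / t) * χ (m : ZMod p)) *
              ((starRingEnd ℂ) (ψ (a : ZMod t)) * ψ (m : ZMod t)) := by
          rw [Finset.sum_comm]
          exact Finset.sum_congr rfl fun a _ => Finset.sum_comm
      _ = ∑ m ∈ Finset.Icc 1 ⌊v⌋₊, ∑ a ∈ Finset.Icc 1 t,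
            (e ((r : ℝ) * a / t) * χ (m : ZMod p)) *
              ∑ ψ : DirichletCharacter ℂ t,
                (starRingEnd ℂ) (ψ (a : ZMod t)) * ψ (m : ZMod t) := by
          rw [Finset.sum_comm]
          exact Finset.sum_congr rfl fun m _ => Finset.sum_congr rfl fun a _ =>
            (Finset.mul_sum _ _ _).symm
  rw [step1]
  have step2 : ∀ m : ℕ, (∑ a ∈ Finset.Icc 1 t,
      (e ((r : ℝ) * a / t) * χ (m : ZMod p)) *
        ∑ ψ : DirichletCharacter ℂ t,
          (starRingEnd ℂ) (ψ (a : ZMod t)) * ψ (m : ZMod t)) =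
      (if IsUnit ((m : ℕ) : ZMod t) then
        (e ((r : ℝ) * m / t) * χ (m : ZMod p)) * (t.totient : ℂ) else 0) := by
    intro m
    have hrep := sum_Icc_rep ht m
      (fun a => if IsUnit ((m : ℕ) : ZMod t) then
        (e ((r : ℝ) * a / t) * χ (m : ZMod p)) * (t.totient : ℂ) else 0)
      (by
        intro a h
        by_cases hu : IsUnit ((m : ℕ) : ZMod t)
        · simp only [if_pos hu]
          rw [e_congr ht r h]
        · simp only [if_neg hu])
    refine Eq.trans (Finset.sum_congr rfl fun a _ => ?_) hrep
    rw [orth t a m]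
    by_cases hc : ((a : ℕ) : ZMod t) = ((m : ℕ) : ZMod t)
    · rw [if_pos hc]
      show (e ((r : ℝ) * a / t) * χ (m : ZMod p) *
          if IsUnit ((a : ℕ) : ZMod t) ∧ ((a : ZMod t) = (m : ZMod t)) then
            (t.totient : ℂ) else 0) =
        if IsUnit ((m : ℕ) : ZMod t) then
          e ((r : ℝ) * a / t) * χ (m : ZMod p) * (t.totient : ℂ) else 0
      by_cases hu : IsUnit ((m : ℕ) : ZMod t)
      · rw [if_pos ⟨by rw [hc]; exact hu, hc⟩, if_pos hu]
      · rw [if_neg (fun h => hu (hc ▸ h.1)), if_neg hu, mul_zero]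
    · rw [if_neg hc, if_neg (fun h => hc h.2), mul_zero]
  rw [Finset.sum_congr rfl fun m _ => step2 m, Finset.mul_sum]
  refine Finset.sum_congr rfl fun m _ => ?_
  by_cases hu : IsUnit ((m : ℕ) : ZMod t)
  · rw [if_pos hu, if_pos hu]
    field_simp
  · rw [if_neg hu, if_neg hu, mul_zero]

/-- Grouping by `gcd(n,s)` and orthogonality: for a Dirichlet character `χ` mod a prime `p` and
coprime `r, s` with `s ≥ 1`,
`∑_{n≤u} χ(n) e(rn/s) = ∑_{dt=s} (χ(d)/φ(t)) ∑_{ψ mod t} (∑_{a≤t} e(ra/t) ψ̄(a)) ∑_{m≤u/d} χ(m)ψ(m)`. -/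
theorem char_sum_factorization (p : ℕ) (hp : p.Prime) (χ : DirichletCharacter ℂ p)
    (r s : ℕ) (hs : 1 ≤ s) (hrs : Nat.Coprime r s) (u : ℝ) :
    ∑ n ∈ Finset.Icc 1 ⌊u⌋₊, χ (n : ZMod p) * e ((r : ℝ) * n / s) =
      ∑ d ∈ s.divisors, (χ (d : ZMod p) / (Nat.totient (s / d) : ℂ)) *
        ∑ ψ : DirichletCharacter ℂ (s / d),
          (∑ a ∈ Finset.Icc 1 (s / d), e ((r : ℝ) * a / (s / d)) *
              (starRingEnd ℂ) (ψ (a : ZMod (s / d)))) *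
            ∑ m ∈ Finset.Icc 1 ⌊u / d⌋₊, χ (m : ZMod p) * ψ (m : ZMod (s / d)) := by
  classical
  have hs0 : s ≠ 0 := by omega
  -- Step 1: simplify the right-hand side using orthogonality
  have hR : (∑ d ∈ s.divisors, (χ (d : ZMod p) / (Nat.totient (s / d) : ℂ)) *
        ∑ ψ : DirichletCharacter ℂ (s / d),
          (∑ a ∈ Finset.Icc 1 (s / d), e ((r : ℝ) * a / (s / d)) *
              (starRingEnd ℂ) (ψ (a : ZMod (s / d)))) *
            ∑ m ∈ Finset.Icc 1 ⌊u / d⌋₊, χ (m : ZMod p) * ψ (m : ZMod (s / d))) =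
      ∑ d ∈ s.divisors, ∑ m ∈ Finset.Icc 1 ⌊u / (d : ℝ)⌋₊,
        if IsUnit ((m : ℕ) : ZMod (s / d)) then
          χ ((d : ℕ) : ZMod p) * (χ ((m : ℕ) : ZMod p) *
            e ((r : ℝ) * m / ((s / d : ℕ) : ℝ))) else 0 := by
    refine Finset.sum_congr rfl fun d hd => ?_
    have hdvd : d ∣ s := (Nat.mem_divisors.mp hd).1
    have hd0 : 0 < d := Nat.pos_of_mem_divisors hd
    have htpos : 0 < s / d := Nat.div_pos (Nat.le_of_dvd (by omega) hdvd) hd0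
    have hcast : ((s / d : ℕ) : ℝ) = (s : ℝ) / (d : ℝ) :=
      Nat.cast_div hdvd (Nat.cast_ne_zero.mpr hd0.ne')
    rw [← hcast]
    calc (χ (d : ZMod p) / (Nat.totient (s / d) : ℂ)) *
        ∑ ψ : DirichletCharacter ℂ (s / d),
          (∑ a ∈ Finset.Icc 1 (s / d), e ((r : ℝ) * a / ((s / d : ℕ) : ℝ)) *
              (starRingEnd ℂ) (ψ (a : ZMod (s / d)))) *
            ∑ m ∈ Finset.Icc 1 ⌊u / d⌋₊, χ (m : ZMod p) * ψ (m : ZMod (s / d))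
        = χ (d : ZMod p) * ((1 / (Nat.totient (s / d) : ℂ)) *
            ∑ ψ : DirichletCharacter ℂ (s / d),
              (∑ a ∈ Finset.Icc 1 (s / d), e ((r : ℝ) * a / ((s / d : ℕ) : ℝ)) *
                  (starRingEnd ℂ) (ψ (a : ZMod (s / d)))) *
                ∑ m ∈ Finset.Icc 1 ⌊u / d⌋₊, χ (m : ZMod p) * ψ (m : ZMod (s / d))) := by
          ring
      _ = χ (d : ZMod p) * ∑ m ∈ Finset.Icc 1 ⌊u / (d : ℝ)⌋₊,
            if IsUnit ((m : ℕ) : ZMod (s / d)) then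
              χ (m : ZMod p) * e ((r : ℝ) * m / ((s / d : ℕ) : ℝ)) else 0 := by
          rw [inner_eq p (s / d) χ r htpos (u / d)]
      _ = _ := by
          rw [Finset.mul_sum]
          refine Finset.sum_congr rfl fun m _ => ?_
          by_cases hu : IsUnit ((m : ℕ) : ZMod (s / d))
          · rw [if_pos hu, if_pos hu]
          · rw [if_neg hu, if_neg hu, mul_zero]
  rw [hR]
  -- Step 2: reindex the left-hand side
  have hL : (∑ n ∈ Finset.Icc 1 ⌊u⌋₊, χ (n : ZMod p) * e ((r : ℝ) * n / s)) =
      ∑ x ∈ s.divisors.sigma (fun d => (Finset.Icc 1 ⌊u / (d : ℝ)⌋₊).filter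
          (fun m => IsUnit ((m : ℕ) : ZMod (s / d)))),
        χ ((x.1 : ℕ) : ZMod p) * (χ ((x.2 : ℕ) : ZMod p) *
          e ((r : ℝ) * x.2 / ((s / x.1 : ℕ) : ℝ))) := by
    refine Finset.sum_nbij' (i := fun n => ⟨Nat.gcd n s, n / Nat.gcd n s⟩)
      (j := fun x => x.1 * x.2) ?_ ?_ ?_ ?_ ?_
    · intro n hn
      rw [Finset.mem_Icc] at hn
      have hg0 : 0 < Nat.gcd n s := Nat.gcd_pos_of_pos_right n (by omega)
      have hn0 : 0 < n := hn.1
      have hnu : (n : ℝ) ≤ u := by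
        have h1 : 1 ≤ ⌊u⌋₊ := le_trans hn.1 hn.2
        have hu0 : 0 ≤ u := by
          by_contra h
          push_neg at h
          rw [Nat.floor_eq_zero.mpr (by linarith)] at h1
          omega
        exact (Nat.le_floor_iff hu0).mp hn.2
      rw [Finset.mem_sigma]
      constructor
      · exact Nat.mem_divisors.mpr ⟨Nat.gcd_dvd_right n s, hs0⟩
      · rw [Finset.mem_filter, Finset.mem_Icc]
        refine ⟨⟨Nat.div_pos (Nat.le_of_dvd hn0 (Nat.gcd_dvd_left n s)) hg0, ?_⟩, ?_⟩
        · apply Nat.le_floor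
          rw [le_div_iff₀ (by exact_mod_cast hg0)]
          have : (n / Nat.gcd n s : ℕ) * (Nat.gcd n s : ℕ) = n :=
            Nat.div_mul_cancel (Nat.gcd_dvd_left n s)
          calc ((n / Nat.gcd n s : ℕ) : ℝ) * (Nat.gcd n s : ℕ) = n := by exact_mod_cast this
            _ ≤ u := hnu
        · rw [ZMod.isUnit_iff_coprime]
          exact Nat.coprime_div_gcd_div_gcd hg0
    · intro x hx
      rw [Finset.mem_sigma, Finset.mem_filter, Finset.mem_Icc] at hx
      obtain ⟨hd, ⟨hm1, hm2⟩, _⟩ := hx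
      have hd0 : 0 < x.1 := Nat.pos_of_mem_divisors hd
      rw [Finset.mem_Icc]
      constructor
      · exact Nat.one_le_iff_ne_zero.mpr (Nat.mul_ne_zero hd0.ne' (by omega))
      · apply Nat.le_floor
        have h1 : 1 ≤ ⌊u / (x.1 : ℝ)⌋₊ := le_trans hm1 hm2
        have hw0 : 0 ≤ u / (x.1 : ℝ) := by
          by_contra h
          push_neg at h
          rw [Nat.floor_eq_zero.mpr (by linarith)] at h1
          omega
        have := (Nat.le_floor_iff hw0).mp hm2
        rw [le_div_iff₀ (by exact_mod_cast hd0)] at this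
        push_cast
        calc (x.1 : ℝ) * x.2 = (x.2 : ℝ) * x.1 := by ring
          _ ≤ u := this
    · intro n _
      exact Nat.mul_div_cancel' (Nat.gcd_dvd_left n s)
    · intro x hx
      rw [Finset.mem_sigma, Finset.mem_filter, Finset.mem_Icc] at hx
      obtain ⟨hd, ⟨hm1, _⟩, hcop⟩ := hx
      have hdvd : x.1 ∣ s := (Nat.mem_divisors.mp hd).1
      have hd0 : 0 < x.1 := Nat.pos_of_mem_divisors hd
      rw [ZMod.isUnit_iff_coprime] at hcop
      have hgcd : Nat.gcd (x.1 * x.2) s = x.1 := by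
        conv_lhs => rw [← Nat.div_mul_cancel hdvd]
        rw [Nat.mul_comm (s / x.1) x.1]
        rw [Nat.gcd_mul_left]
        rw [Nat.Coprime.gcd_eq_one hcop, mul_one]
      show (⟨Nat.gcd (x.1 * x.2) s, (x.1 * x.2) / Nat.gcd (x.1 * x.2) s⟩ :
          (_ : ℕ) × ℕ) = x
      rw [hgcd, Nat.mul_div_cancel_left _ hd0]
    · intro n hn
      rw [Finset.mem_Icc] at hn
      have hg0 : 0 < Nat.gcd n s := Nat.gcd_pos_of_pos_right n (by omega)
      have hgs : Nat.gcd n s ∣ s := Nat.gcd_dvd_right n s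
      have hgn : Nat.gcd n s ∣ n := Nat.gcd_dvd_left n s
      have ht0 : 0 < s / Nat.gcd n s :=
        Nat.div_pos (Nat.le_of_dvd (by omega) hgs) hg0
      have hable : χ (n : ZMod p) = χ ((Nat.gcd n s : ℕ) : ZMod p) *
          χ ((n / Nat.gcd n s : ℕ) : ZMod p) := by
        rw [← map_mul, ← Nat.cast_mul, Nat.mul_div_cancel' hgn]
      rw [hable]
      rw [mul_assoc]
      congr 2
      -- e ((r : ℝ) * n / s) = e ((r : ℝ) * (n/g) / ((s/g : ℕ) : ℝ))
      have h1 : ((n / Nat.gcd n s : ℕ) : ℝ) * (Nat.gcd n s : ℝ) = (n : ℝ) := by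
        exact_mod_cast congrArg (Nat.cast : ℕ → ℝ) (Nat.div_mul_cancel hgn)
      have h2 : ((s / Nat.gcd n s : ℕ) : ℝ) * (Nat.gcd n s : ℝ) = (s : ℝ) := by
        exact_mod_cast congrArg (Nat.cast : ℕ → ℝ) (Nat.div_mul_cancel hgs)
      congr 1
      rw [← h1, ← h2]
      have hg' : (Nat.gcd n s : ℝ) ≠ 0 := Nat.cast_ne_zero.mpr hg0.ne'
      have ht' : ((s / Nat.gcd n s : ℕ) : ℝ) ≠ 0 := Nat.cast_ne_zero.mpr ht0.ne'
      field_simp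
  rw [hL, Finset.sum_sigma]
  refine Finset.sum_congr rfl fun d hd => ?_
  rw [Finset.sum_filter]
end
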